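/- Let λ be a two-row partition of n and m be such that l_λ = max{λ₁,λ₂+1} ≤ m ≤ n. Then the two sets E_{λ;m}^{(1)} and E_{λ;m}^{(2)} (equivalence classes whose Φ-image has shape λ_m^{(1)} resp. λ_m^{(2)}) form a partition of the set E_{λ;m} of all equivalence classes of IGLT(λ)_m under ∼_{λ;m}, and an equivalence class E lies in E_{λ;m}^{(1)} if and only if for every T ∈ E the entry T(2, λ₂) occurs exactly once in T. -/

import Mathlib

/-- A two-row tableau, given by its two rows (lists of entries). -/
structure TwoRowT where
  r1 : List ℕ
  r2 : List ℕ
deriving DecidableEq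

/-- A "hook-plus" tableau: two rows together with the part of the first
column lying below the second row. -/
structure HookT where
  r1 : List ℕ
  r2 : List ℕ
  col : List ℕ
deriving DecidableEq

/-- `T` is an increasing gapless tableau of shape `(l1,l2)` with maximum entry `m`. -/
def IsIGLT (l1 l2 m : ℕ) (T : TwoRowT) : Prop :=
  T.r1.length = l1 ∧ T.r2.length = l2 ∧
  T.r1.Chain' (· < ·) ∧ T.r2.Chain' (· < ·) ∧
  (∀ j, j < l2 → T.r1.getD j 0 < T.r2.getD j 0) ∧
  (∀ x ∈ T.r1, 1 ≤ x ∧ x ≤ m) ∧ (∀ x ∈ T.r2, 1 ≤ x ∧ x ≤ m) ∧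
  (∀ k, 1 ≤ k → k ≤ m → k ∈ T.r1 ∨ k ∈ T.r2) ∧
  (m ∈ T.r1 ∨ m ∈ T.r2)

/-- The set `A` of repeated entries of a two-row increasing tableau. -/
def setA (T : TwoRowT) : List ℕ := T.r1.filter (fun x => x ∈ T.r2)

/-- The set `B`: entries of the second row immediately to the right of an element of `A`. -/
def setB (T : TwoRowT) : List ℕ :=
  (T.r2.zip T.r2.tail).filterMap (fun p => if p.1 ∈ setA T then some p.2 else none)

/-- Pechenik's map `Φ_{λ;m}`. -/
def Phi (T : TwoRowT) : HookT :=
  ⟨T.r1.filter (fun x => x ∉ setA T),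
   T.r2.filter (fun x => x ∉ setB T),
   List.insertionSort (· ≤ ·) (setB T)⟩

/-- The shape of a hook-plus tableau, as a list. -/
def shapeOf (S : HookT) : List ℕ :=
  S.r1.length :: S.r2.length :: List.replicate S.col.length 1

/-- `S` is a standard Young tableau with entries `1,...,m`. -/
def IsSYTHook (m : ℕ) (S : HookT) : Prop :=
  S.r1.Chain' (· < ·) ∧ S.r2.Chain' (· < ·) ∧
  ((S.r1.take 1) ++ (S.r2.take 1) ++ S.col).Chain' (· < ·) ∧
  (∀ j, j < S.r2.length → S.r1.getD j 0 < S.r2.getD j 0) ∧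
  S.r2.length ≤ S.r1.length ∧
  (S.col ≠ [] → S.r2 ≠ []) ∧
  (S.r1 ++ S.r2 ++ S.col).Perm (List.range' 1 m)

/-- The shape `λ_m^{(1)} = (λ₁-k, λ₂-k, 1^k)`. -/
def lamShape1 (l1 l2 k : ℕ) : List ℕ := [l1 - k, l2 - k] ++ List.replicate k 1

/-- The shape `λ_m^{(2)} = (λ₁-k, λ₂-k+1, 1^(k-1))`. -/
def lamShape2 (l1 l2 k : ℕ) : List ℕ := [l1 - k, l2 - k + 1] ++ List.replicate (k - 1) 1

/-- The set `Par(λ;m)` of shapes occurring in Pechenik's expansion. -/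
def ParSet (l1 l2 n m : ℕ) : Set (List ℕ) :=
  {s | (n - m + 1 < l2 ∨ m = n) ∧ s = lamShape1 l1 l2 (n - m)} ∪
  {s | l1 ≠ l2 ∧ m < n ∧ n - m < l2 ∧ s = lamShape2 l1 l2 (n - m)}

/-- Row index (1-based) of the entry `x` in a hook-plus tableau. -/
def rowIdx (S : HookT) (x : ℕ) : ℕ :=
  if x ∈ S.r1 then 1 else if x ∈ S.r2 then 2 else 3 + S.col.idxOf x

/-- Column index (0-based) of the entry `x` in a hook-plus tableau. -/
def colIdx (S : HookT) (x : ℕ) : ℕ :=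
  if x ∈ S.r1 then S.r1.idxOf x else if x ∈ S.r2 then S.r2.idxOf x else 0

/-- Descent set of an increasing gapless two-row tableau with max entry `m`. -/
def desT (m : ℕ) (T : TwoRowT) : Finset ℕ :=
  (Finset.Ioo 0 m).filter (fun i => i ∈ T.r1 ∧ i + 1 ∈ T.r2)

/-- Descent set of a standard Young tableau with entries `1,...,m`. -/
def desS (m : ℕ) (S : HookT) : Finset ℕ :=
  (Finset.Ioo 0 m).filter (fun i => rowIdx S i < rowIdx S (i + 1))

def swapVal (i j x : ℕ) : ℕ := if x = i then j else if x = j then i else x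

/-- Swap the entries `i` and `j` in a two-row tableau. -/
def twoRowSwap (i j : ℕ) (T : TwoRowT) : TwoRowT :=
  ⟨T.r1.map (swapVal i j), T.r2.map (swapVal i j)⟩

/-- Swap the entries `i` and `j` in a hook-plus tableau. -/
def hookSwap (i j : ℕ) (S : HookT) : HookT :=
  ⟨S.r1.map (swapVal i j), S.r2.map (swapVal i j), S.col.map (swapVal i j)⟩

/-- Searles' 0-Hecke operator `π_i` on a standard Young tableau:
`some S` means the result is `S`, `none` means the result is `0`. -/
def searlesStep (i : ℕ) (S : HookT) : Option HookT :=
  if colIdx S i < colIdx S (i + 1) then some S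
  else if colIdx S i = colIdx S (i + 1) then none
  else some (hookSwap i (i + 1) S)

/-- Kim–Yoo's 0-Hecke operator `π_i` on an increasing gapless tableau. -/
def kyStep (i : ℕ) (T : TwoRowT) : Option TwoRowT :=
  if i ∈ T.r1 ∧ i + 1 ∈ T.r2 then
    if i ∉ T.r2 ∧ i + 1 ∉ T.r1 ∧ T.r2.idxOf (i + 1) < T.r1.idxOf i then
      some (twoRowSwap i (i + 1) T)
    else none
  else some T

/-- Searles' operator, extended linearly. -/
noncomputable def piOp (i : ℕ) : (HookT →₀ ℂ) →ₗ[ℂ] (HookT →₀ ℂ) :=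
  Finsupp.lsum ℂ fun S => (searlesStep i S).elim 0 fun S' => Finsupp.lsingle S'

/-- Kim–Yoo's operator, extended linearly. -/
noncomputable def kyOp (i : ℕ) : (TwoRowT →₀ ℂ) →ₗ[ℂ] (TwoRowT →₀ ℂ) :=
  Finsupp.lsum ℂ fun T => (kyStep i T).elim 0 fun T' => Finsupp.lsingle T'

/-- The data of the boxes occupied by repeated entries: for each repeated entry `i`,
the pair of (0-based) columns of its occurrence in row 1 and in row 2.
For two-row shapes this datum determines the pair `(Γ_i(T), T⁻¹(i))`. -/
def repPairs (T : TwoRowT) : Set (ℕ × ℕ) :=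
  {p | ∃ i, i ∈ T.r1 ∧ i ∈ T.r2 ∧ p = (T.r1.idxOf i, T.r2.idxOf i)}

/-- The Kim–Yoo equivalence `∼_{λ;m}` on two-row increasing gapless tableaux. -/
def equivKY (T1 T2 : TwoRowT) : Prop := repPairs T1 = repPairs T2

/-- The equivalence class of `T` in `IGLT(λ)_m` under `∼_{λ;m}`. -/
def classOf (l1 l2 m : ℕ) (T : TwoRowT) : Set TwoRowT :=
  {T' | IsIGLT l1 l2 m T' ∧ equivKY T T'}

/-- The columns (0-based) of the bottommost boxes of the repeated entries,
listed in increasing order of the repeated entries. -/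
def botCols (T : TwoRowT) : List ℕ :=
  (T.r1.filter (fun x => x ∈ T.r2)).map (fun i => T.r2.idxOf i)

/-- The partial order `⪯` on equivalence classes. -/
def classLE (C1 C2 : Set TwoRowT) : Prop :=
  ∃ T1 ∈ C1, ∃ T2 ∈ C2, List.Forall₂ (· ≤ ·) (botCols T1) (botCols T2)

open Classical in
/-- The fundamental quasisymmetric function `F_{comp(D)}` of degree `m`,
as a formal power series in the variables `x_0, x_1, x_2, ...`. -/
noncomputable def Fqs (m : ℕ) (D : Finset ℕ) : MvPowerSeries ℕ ℚ :=
  fun e =>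
    if ∃ f : Fin m → ℕ, Monotone f ∧
        (∀ j : ℕ, ∀ hj : j < m, 0 < j → j ∈ D → f ⟨j - 1, by omega⟩ < f ⟨j, hj⟩) ∧
        (∀ i : ℕ, e i = Nat.card {j : Fin m // f j = i})
    then 1 else 0

/-- The Schur function `s_μ = Σ_{S ∈ SYT(μ)} F_{comp(Des(S))}` (for shapes
representable as hook-plus tableaux). -/
noncomputable def schurF (m : ℕ) (μ : List ℕ) : MvPowerSeries ℕ ℚ :=
  ∑ᶠ S ∈ {S : HookT | IsSYTHook m S ∧ shapeOf S = μ}, Fqs m (desS m S)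


section Aux
variable {α β : Type*}

lemma aux_filterMap (P : α → Prop) [DecidablePred P] (l : List (α × β)) :
    l.filterMap (fun p => if P p.1 then some p.2 else none) =
    (l.filter (fun p => P p.1)).map Prod.snd := by
  induction l with
  | nil => rfl
  | cons a t ih =>
    by_cases h : P a.1 <;> simp [List.filterMap_cons, List.filter_cons, h, ih]

lemma aux_zip_fst : ∀ (l : List α), (l.zip l.tail).map Prod.fst = l.dropLast
  | [] => rfl
  | [a] => rfl
  | a :: b :: t => by
      simp only [List.tail_cons, List.zip_cons_cons, List.map_cons, List.dropLast_cons₂]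
      exact congrArg _ (aux_zip_fst (b :: t))

lemma aux_zip_snd (l : List α) : (l.zip l.tail).map Prod.snd = l.tail :=
  List.map_snd_zip (l.tail_sublist.length_le)

lemma aux_len_filter_eq_card (l : List ℕ) (hl : l.Nodup) (p : ℕ → Prop) [DecidablePred p] :
    (l.filter (fun x => p x)).length = (l.toFinset.filter p).card := by
  rw [← List.toFinset_card_of_nodup (hl.filter _), List.toFinset_filter]
  congr 1
  apply Finset.filter_congr
  intro x _
  simp

lemma aux_nodup_of_chain {l : List ℕ} (h : l.Chain' (· < ·)) : l.Nodup :=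
  (List.isChain_iff_pairwise.mp h).imp (fun hab => Nat.ne_of_lt hab)

end Aux

section Main

lemma aux_filter_not_len {α : Type*} (p : α → Prop) [DecidablePred p] (l : List α) :
    (l.filter (fun x => p x)).length + (l.filter (fun x => ¬ p x)).length = l.length := by
  induction l with
  | nil => rfl
  | cons a t ih => by_cases h : p a <;> simp [List.filter_cons, h, decide_not] <;>
      simp [decide_not] at ih <;> omega

lemma aux_len_filter_mem (l s : List ℕ) (hl : l.Nodup) :
    (l.filter (fun x => x ∈ s)).length = (l.toFinset ∩ s.toFinset).card := by
  rw [aux_len_filter_eq_card l hl (fun x => x ∈ s), ← Finset.filter_mem_eq_inter]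
  exact congrArg _ (Finset.filter_congr (fun x _ => by simp))

lemma shape_lemma (l1 l2 n m : ℕ) (h2 : 1 ≤ l2) (hn : n = l1 + l2) (hm : 1 ≤ m)
    (T' : TwoRowT) (hT' : IsIGLT l1 l2 m T') :
    shapeOf (Phi T') =
      if T'.r2.getD (l2 - 1) 0 ∈ T'.r1 then lamShape2 l1 l2 (n - m)
      else lamShape1 l1 l2 (n - m) := by
  obtain ⟨e1, e2, c1, c2, hcol, b1, b2, gap, -⟩ := hT'
  have nd1 := aux_nodup_of_chain c1
  have nd2 := aux_nodup_of_chain c2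
  have memA : ∀ x, x ∈ setA T' ↔ x ∈ T'.r1 ∧ x ∈ T'.r2 := by
    intro x; simp [setA]
  -- cardinality of the intersection
  have hU : T'.r1.toFinset ∪ T'.r2.toFinset = Finset.Icc 1 m := by
    ext x
    simp only [Finset.mem_union, List.mem_toFinset, Finset.mem_Icc]
    constructor
    · rintro (h | h)
      · exact b1 x h
      · exact b2 x h
    · rintro ⟨ha, hb⟩; exact gap x ha hb
  have hc1 : T'.r1.toFinset.card = l1 := by
    rw [List.toFinset_card_of_nodup nd1, e1]
  have hc2 : T'.r2.toFinset.card = l2 := by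
    rw [List.toFinset_card_of_nodup nd2, e2]
  have hsum := Finset.card_union_add_card_inter T'.r1.toFinset T'.r2.toFinset
  rw [hU, hc1, hc2, Nat.card_Icc] at hsum
  have hIle2 : (T'.r1.toFinset ∩ T'.r2.toFinset).card ≤ l2 :=
    hc2 ▸ Finset.card_le_card Finset.inter_subset_right
  have hIc : (T'.r1.toFinset ∩ T'.r2.toFinset).card = n - m := by omega
  set k := n - m with hk
  have hkle : k ≤ l2 := hIc ▸ hIle2
  -- length of the filter of setA over each row
  have hA1 : (T'.r1.filter (fun x => x ∈ setA T')).length = k := by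
    have e : T'.r1.filter (fun x => x ∈ setA T') = T'.r1.filter (fun x => x ∈ T'.r2) :=
      List.filter_congr (fun x hx => by simp [memA, hx])
    rw [e, aux_len_filter_mem _ _ nd1, hIc]
  have hA2 : (T'.r2.filter (fun x => x ∈ setA T')).length = k := by
    have e : T'.r2.filter (fun x => x ∈ setA T') = T'.r2.filter (fun x => x ∈ T'.r1) :=
      List.filter_congr (fun x hx => by simp [memA, hx])
    rw [e, aux_len_filter_mem _ _ nd2, Finset.inter_comm, hIc]
  -- the last entry of row 2
  have hlt : l2 - 1 < T'.r2.length := by omega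
  have hr2ne : T'.r2 ≠ [] := by
    intro h; rw [h] at e2; simp at e2; omega
  have hx0 : T'.r2.getD (l2 - 1) 0 = T'.r2[l2 - 1] := List.getD_eq_getElem _ _ hlt
  set x0 := T'.r2.getD (l2 - 1) 0 with hx0def
  have hx0mem : x0 ∈ T'.r2 := by rw [hx0]; exact List.getElem_mem _
  have hlast : T'.r2.getLast hr2ne = x0 := by
    rw [List.getLast_eq_getElem, hx0]
    congr 1
    omega
  have hsplit : T'.r2.dropLast ++ [x0] = T'.r2 := by
    rw [← hlast]; exact List.dropLast_append_getLast hr2ne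
  -- length of setB
  have hBdef : setB T' = ((T'.r2.zip T'.r2.tail).filter (fun p => p.1 ∈ setA T')).map Prod.snd :=
    aux_filterMap _ _
  have hBlen : (setB T').length = (T'.r2.dropLast.filter (fun x => x ∈ setA T')).length := by
    rw [hBdef, List.length_map, ← aux_zip_fst T'.r2, List.filter_map, List.length_map]
    rfl
  have hfl : (T'.r2.filter (fun x => x ∈ setA T')).length
      = (T'.r2.dropLast.filter (fun x => x ∈ setA T')).length
        + (if x0 ∈ setA T' then 1 else 0) := by
    conv_lhs => rw [← hsplit]
    rw [List.filter_append, List.length_append]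
    congr 1
    by_cases h : x0 ∈ setA T' <;> simp [h]
  -- Phi row lengths
  have H1 : (Phi T').r1.length = l1 - k := by
    have := aux_filter_not_len (fun x => x ∈ setA T') T'.r1
    rw [hA1, e1] at this
    show (T'.r1.filter (fun x => x ∉ setA T')).length = l1 - k
    omega
  have hBsub : List.Sublist (setB T') T'.r2 := by
    rw [hBdef]
    have h1 := List.Sublist.map Prod.snd
      (List.filter_sublist (l := T'.r2.zip T'.r2.tail) (p := fun p => decide (p.1 ∈ setA T')))
    rw [aux_zip_snd] at h1
    exact h1.trans (List.tail_sublist T'.r2)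
  have hBnd : (setB T').Nodup := hBsub.nodup nd2
  have hmemB : (T'.r2.filter (fun x => x ∈ setB T')).length = (setB T').length := by
    rw [aux_len_filter_eq_card _ nd2]
    have : Finset.filter (fun x => x ∈ setB T') T'.r2.toFinset
        = T'.r2.toFinset ∩ (setB T').toFinset := by
      rw [← Finset.filter_mem_eq_inter]
      exact Finset.filter_congr (fun x _ => by simp)
    rw [this, Finset.inter_eq_right.mpr
      (fun x hx => List.mem_toFinset.mpr (hBsub.subset (List.mem_toFinset.mp hx))),
      List.toFinset_card_of_nodup hBnd]
  have H2 : (Phi T').r2.length = l2 - (setB T').length := by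
    have := aux_filter_not_len (fun x => x ∈ setB T') T'.r2
    rw [hmemB, e2] at this
    show (T'.r2.filter (fun x => x ∉ setB T')).length = l2 - (setB T').length
    omega
  have H3 : (Phi T').col.length = (setB T').length := List.length_insertionSort _ _
  have hshape : shapeOf (Phi T')
      = (l1 - k) :: (l2 - (setB T').length) :: List.replicate (setB T').length 1 := by
    rw [shapeOf, H1, H2, H3]
  by_cases hrep : x0 ∈ T'.r1
  · have hxA : x0 ∈ setA T' := (memA x0).mpr ⟨hrep, hx0mem⟩
    rw [if_pos hxA] at hfl
    rw [hA2] at hfl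
    have hB : (setB T').length = k - 1 := by omega
    have hk1 : 1 ≤ k := by omega
    rw [if_pos hrep, hshape, hB, lamShape2]
    have h22 : l2 - (k - 1) = l2 - k + 1 := by omega
    rw [h22]
    rfl
  · have hxA : x0 ∉ setA T' := fun h => hrep ((memA x0).mp h).1
    rw [if_neg hxA] at hfl
    rw [hA2] at hfl
    have hB : (setB T').length = k := by omega
    rw [if_neg hrep, hshape, hB, lamShape1]
    rfl

end Main

lemma lastRep_iff (l1 l2 m : ℕ) (h2 : 1 ≤ l2) (T : TwoRowT) (hT : IsIGLT l1 l2 m T) :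
    (T.r2.getD (l2 - 1) 0 ∈ T.r1) ↔ ∃ p ∈ repPairs T, p.2 = l2 - 1 := by
  obtain ⟨e1, e2, c1, c2, -, -, -, -, -⟩ := hT
  have nd2 := aux_nodup_of_chain c2
  have hlt : l2 - 1 < T.r2.length := by omega
  have hx0 : T.r2.getD (l2 - 1) 0 = T.r2[l2 - 1] := List.getD_eq_getElem _ _ hlt
  constructor
  · intro h
    refine ⟨(T.r1.idxOf (T.r2.getD (l2 - 1) 0), T.r2.idxOf (T.r2.getD (l2 - 1) 0)),
      ⟨T.r2.getD (l2 - 1) 0, h, ?_, rfl⟩, ?_⟩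
    · rw [hx0]; exact List.getElem_mem _
    · show T.r2.idxOf (T.r2.getD (l2 - 1) 0) = l2 - 1
      rw [hx0]
      exact nd2.idxOf_getElem _ hlt
  · rintro ⟨p, ⟨i, hi1, hi2, rfl⟩, hp⟩
    have hp' : T.r2.idxOf i = l2 - 1 := hp
    have hidx : T.r2.idxOf i < T.r2.length := List.idxOf_lt_length_iff.mpr hi2
    have hgi : T.r2[T.r2.idxOf i]'hidx = i := List.getElem_idxOf hidx
    simp only [hp'] at hgi
    rw [hx0, hgi]
    exact hi1


/-- The sets `E_{λ;m}^{(1)}` and `E_{λ;m}^{(2)}` partition the set of equivalence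
classes of `IGLT(λ)_m`: every equivalence class consists entirely of tableaux whose
`Φ`-image has shape `λ_m^{(1)}`, or entirely of tableaux whose `Φ`-image has shape
`λ_m^{(2)}`, and not both; moreover a class lies in `E_{λ;m}^{(1)}` if and only if for
every tableau `T'` in the class the entry `T'(2,λ₂)` occurs exactly once in `T'`. -/
theorem stmt_18 (l1 l2 n m : ℕ) (h2 : 1 ≤ l2) (h12 : l2 ≤ l1) (hn : n = l1 + l2)
    (hm1 : max l1 (l2 + 1) ≤ m) (hm2 : m ≤ n)
    (T : TwoRowT) (hT : IsIGLT l1 l2 m T) :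
    Xor'
      (∀ T' ∈ classOf l1 l2 m T, shapeOf (Phi T') = lamShape1 l1 l2 (n - m))
      (∀ T' ∈ classOf l1 l2 m T, shapeOf (Phi T') = lamShape2 l1 l2 (n - m)) ∧
    ((∀ T' ∈ classOf l1 l2 m T, shapeOf (Phi T') = lamShape1 l1 l2 (n - m)) ↔
      (∀ T' ∈ classOf l1 l2 m T, T'.r2.getD (l2 - 1) 0 ∉ T'.r1)) := by
  have hm' : 1 ≤ m := le_trans (le_trans (by omega) (le_max_right l1 (l2 + 1))) hm1
  have hself : T ∈ classOf l1 l2 m T := ⟨hT, rfl⟩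
  have hrep_inv : ∀ T' ∈ classOf l1 l2 m T,
      (T'.r2.getD (l2 - 1) 0 ∈ T'.r1 ↔ T.r2.getD (l2 - 1) 0 ∈ T.r1) := by
    rintro T' ⟨hT', he⟩
    have he' : repPairs T = repPairs T' := he
    rw [lastRep_iff l1 l2 m h2 T' hT', lastRep_iff l1 l2 m h2 T hT, he']
  have hkey : ∀ T' ∈ classOf l1 l2 m T, shapeOf (Phi T') =
      (if T.r2.getD (l2 - 1) 0 ∈ T.r1 then lamShape2 l1 l2 (n - m)
       else lamShape1 l1 l2 (n - m)) := by
    intro T' hT'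
    rw [shape_lemma l1 l2 n m h2 hn hm' T' hT'.1]
    by_cases h : T.r2.getD (l2 - 1) 0 ∈ T.r1
    · rw [if_pos h, if_pos ((hrep_inv T' hT').mpr h)]
    · rw [if_neg h, if_neg (fun hh => h ((hrep_inv T' hT').mp hh))]
  have hne : lamShape1 l1 l2 (n - m) ≠ lamShape2 l1 l2 (n - m) := by
    intro h
    simp only [lamShape1, lamShape2, List.cons_append, List.nil_append,
      List.cons.injEq] at h
    omega
  by_cases hrep : T.r2.getD (l2 - 1) 0 ∈ T.r1
  · have hall2 : ∀ T' ∈ classOf l1 l2 m T, shapeOf (Phi T') = lamShape2 l1 l2 (n - m) :=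
      fun T' h => by rw [hkey T' h, if_pos hrep]
    have hnot1 : ¬ (∀ T' ∈ classOf l1 l2 m T, shapeOf (Phi T') = lamShape1 l1 l2 (n - m)) :=
      fun h => hne ((h T hself).symm.trans (hall2 T hself))
    exact ⟨Or.inr ⟨hall2, hnot1⟩, iff_of_false hnot1 (fun h => (h T hself) hrep)⟩
  · have hall1 : ∀ T' ∈ classOf l1 l2 m T, shapeOf (Phi T') = lamShape1 l1 l2 (n - m) :=
      fun T' h => by rw [hkey T' h, if_neg hrep]
    have hnot2 : ¬ (∀ T' ∈ classOf l1 l2 m T, shapeOf (Phi T') = lamShape2 l1 l2 (n - m)) :=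
      fun h => hne ((hall1 T hself).symm.trans (h T hself))
    exact ⟨Or.inl ⟨hall1, hnot2⟩,
      iff_of_true hall1 (fun T' h' hh => hrep ((hrep_inv T' h').mp hh))⟩
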